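/- arXiv:2105.12652 — 4 statements merged into one kernel-verified Lean document; each statement's English description precedes it below -/
import Mathlib

section
/- Let 0<q<1 with q = e^{πiτ}, and let a ∈ ℂ with Im a not an integer multiple of Im τ. Then θ(z−a)·θ(z−ā) is nonnegative for all z ∈ ℝ. -/
open Complex

/-- The Jacobi theta function `θ(z;τ) = Σ_{n∈ℤ} e^{πiτn²} e^{2πizn}`. -/
noncomputable def jacobiThetaFn (τ z : ℂ) : ℂ :=
  ∑' n : ℤ, Complex.exp (Real.pi * Complex.I * τ * (n : ℂ) ^ 2) *
    Complex.exp (2 * Real.pi * Complex.I * z * (n : ℂ))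

lemma conj_jacobiTheta (τ w : ℂ) (hτ : τ.re = 0) :
    (starRingEnd ℂ) (jacobiThetaFn τ w) = jacobiThetaFn τ ((starRingEnd ℂ) w) := by
  have hτc : (starRingEnd ℂ) τ = -τ := Complex.ext (by simp [hτ]) (by simp)
  unfold jacobiThetaFn
  rw [starRingEnd_apply, tsum_star]
  rw [← (Equiv.neg ℤ).tsum_eq]
  congr 1
  funext n
  simp only [Equiv.neg_apply, ← starRingEnd_apply, map_mul, ← Complex.exp_conj,
    map_mul, map_pow, map_ofNat, Complex.conj_I, map_intCast, hτc,
    Complex.conj_ofReal, Int.cast_neg, map_neg]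
  ring_nf

theorem theta_pair_nonneg_on_real (q : ℝ) (hq0 : 0 < q) (hq1 : q < 1) (τ : ℂ)
    (hτre : τ.re = 0) (hτim : 0 < τ.im)
    (hqτ : (q : ℂ) = Complex.exp (Real.pi * Complex.I * τ)) (a : ℂ)
    (ha : ∀ k : ℤ, a.im ≠ (k : ℝ) * τ.im) :
    ∀ z : ℝ, ∃ r : ℝ, 0 ≤ r ∧
      jacobiThetaFn τ ((z : ℂ) - a) * jacobiThetaFn τ ((z : ℂ) - (starRingEnd ℂ) a)
        = (r : ℂ) := by
  intro z
  refine ⟨Complex.normSq (jacobiThetaFn τ ((z : ℂ) - a)), Complex.normSq_nonneg _, ?_⟩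
  have h : (z : ℂ) - (starRingEnd ℂ) a = (starRingEnd ℂ) ((z : ℂ) - a) := by
    simp [map_sub, Complex.conj_ofReal]
  rw [h, ← conj_jacobiTheta τ _ hτre, Complex.mul_conj]
end

section
/- Let q ∈ ℂ with 0<|q|<1 and q not a root of unity, t ∈ ℂ×, and P ∈ ℂ[z,z⁻¹] a Laurent polynomial with n > 0 nonzero roots counted with multiplicity. Then the space of linear functionals T: ℂ[z,z⁻¹] → ℂ satisfying T(P(q⁻¹z)R(q⁻¹z) − t·P(qz)R(qz)) = 0 for all Laurent polynomials R has dimension n. -/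
/-!
Write `μ m = T (z ^ m)` for the moments of a functional `T` and `d x = q ^ (-x) - t q ^ x`.
Testing the condition on the monomials `R = z ^ m` shows that `T` is a twisted trace exactly
when the sequence `d · μ` satisfies the two-sided linear recurrence `∑ j, P j ν (j + m) = 0`,
whose leading and trailing coefficients `P k`, `P l` are nonzero. Such a recurrence on `ℤ` has
an `n`-dimensional solution space: a solution is determined by, and can be built from, any `n`
consecutive values (forwards and, via the reflected recurrence, backwards). Since `q` is not a
root of unity, `d` vanishes at most once; if the window of `n ≥ 1` consecutive indices is chosen
to contain that zero, the moments on the window are still free coordinates on twisted traces.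
-/

open Complex

/-- Multiplication of Laurent polynomials given as coefficient functions `ℤ →₀ ℂ`. -/
noncomputable def laurentMul (P R : ℤ →₀ ℂ) : ℤ →₀ ℂ :=
  P.sum fun k c => R.sum fun l d => Finsupp.single (k + l) (c * d)

/-- The substitution `z ↦ c·z` on Laurent polynomials: `S(z) ↦ S(c z)`. -/
noncomputable def laurentScale (c : ℂ) (S : ℤ →₀ ℂ) : ℤ →₀ ℂ :=
  S.sum fun k a => Finsupp.single k (c ^ k * a)

open Finset

section IntRecurrence

variable {K : Type*} [Field K] {n : ℕ} {c : ℕ → K}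

/-- The recurrence `∑ d ≤ n, c d * u (j + d) = 0` solved for its top term `u (j + n)`. -/
def forwardRecurrence (n : ℕ) (c : ℕ → K) : LinearRecurrence K :=
  ⟨n, fun i => -(c n)⁻¹ * c i⟩

theorem isSolution_forwardRecurrence_iff (hcn : c n ≠ 0) {u : ℕ → K} :
    (forwardRecurrence n c).IsSolution u ↔ ∀ j, ∑ d ∈ range (n + 1), c d * u (j + d) = 0 := by
  refine forall_congr' fun j => ?_
  change u (j + n) = ∑ i : Fin n, -(c n)⁻¹ * c i * u (j + i) ↔ _
  simp_rw [sum_range_succ, ← Fin.sum_univ_eq_sum_range (fun i => c i * u (j + i)), mul_assoc,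
    ← mul_sum]
  constructor <;> intro h
  · rw [h]; field_simp; ring
  · field_simp; linear_combination h

def intSolSpace (n : ℕ) (c : ℕ → K) : Submodule K (ℤ → K) where
  carrier := {ν | ∀ m : ℤ, ∑ d ∈ range (n + 1), c d * ν (m + d) = 0}
  zero_mem' := by simp
  add_mem' hν hμ m := by simp [mul_add, sum_add_distrib, hν m, hμ m]
  smul_mem' a ν hν m := by simp [mul_left_comm _ a, ← mul_sum, hν m]

theorem mem_intSolSpace {ν : ℤ → K} :
    ν ∈ intSolSpace n c ↔ ∀ m : ℤ, ∑ d ∈ range (n + 1), c d * ν (m + d) = 0 :=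
  Iff.rfl

theorem sum_eq_zero_of_isSolution (hcn : c n ≠ 0) {u : ℕ → K}
    (hu : (forwardRecurrence n c).IsSolution u) {ν : ℤ → K} {a : ℤ}
    (hν : ∀ j : ℕ, ν (a + j) = u j) {m : ℤ} (hm : a ≤ m) :
    ∑ d ∈ range (n + 1), c d * ν (m + d) = 0 := by
  obtain ⟨j, rfl⟩ : ∃ j : ℕ, m = a + j := ⟨(m - a).toNat, by omega⟩
  convert (isSolution_forwardRecurrence_iff hcn).mp hu j using 3 with d
  rw [← hν, add_assoc, Nat.cast_add]

theorem isSolution_of_mem_intSolSpace (hcn : c n ≠ 0) {ν : ℤ → K} (hν : ν ∈ intSolSpace n c)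
    (a : ℤ) : (forwardRecurrence n c).IsSolution fun j => ν (a + j) :=
  (isSolution_forwardRecurrence_iff hcn).mpr fun j => by
    simpa only [Nat.cast_add, add_assoc] using hν (a + j)

theorem sum_range_reflect_eq (ν : ℤ → K) (b m : ℤ) :
    ∑ d ∈ range (n + 1), c (n - d) * ν (b - (m + d)) =
      ∑ d ∈ range (n + 1), c d * ν (b - m - n + d) := by
  rw [← sum_range_reflect]
  refine sum_congr rfl fun d hd => ?_
  have hd : d ≤ n := by simpa [Nat.lt_succ_iff] using hd
  rw [Nat.add_sub_cancel, Nat.sub_sub_self hd, Nat.cast_sub hd]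
  ring_nf

theorem reflect_mem_intSolSpace {ν : ℤ → K} (hν : ν ∈ intSolSpace n c) (b : ℤ) :
    (fun x => ν (b - x)) ∈ intSolSpace n (fun d => c (n - d)) := fun m => by
  simpa only [sum_range_reflect_eq] using hν (b - m - n)

theorem intSolSpace_apply_add_nat_eq_zero (hcn : c n ≠ 0) {ν : ℤ → K} (hν : ν ∈ intSolSpace n c)
    {a : ℤ} (h : ∀ i < n, ν (a + i) = 0) (j : ℕ) : ν (a + j) = 0 := by
  have hzero : (forwardRecurrence n c).IsSolution 0 := (forwardRecurrence n c).solSpace.zero_mem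
  have := ((forwardRecurrence n c).eq_iff_eqOn_range_order _ _
    (isSolution_of_mem_intSolSpace hcn hν a) hzero).mpr fun i hi => h i (mem_range.mp hi)
  exact congrFun this j

theorem intSolSpace_eq_zero_of_window (hcn : c n ≠ 0) (hc0 : c 0 ≠ 0) {ν : ℤ → K}
    (hν : ν ∈ intSolSpace n c) {a : ℤ} (h : ∀ i < n, ν (a + i) = 0) : ν = 0 := by
  have hfwd := intSolSpace_apply_add_nat_eq_zero hcn hν h
  have hbwd := intSolSpace_apply_add_nat_eq_zero (by simpa using hc0)
    (reflect_mem_intSolSpace hν (a + n - 1)) (a := 0) fun i hi => by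
      simpa [show a + n - 1 - i = a + ((n - 1 - i : ℕ) : ℤ) by omega] using h (n - 1 - i) (by omega)
  funext x
  rcases le_or_gt a x with hx | hx
  · obtain ⟨j, rfl⟩ : ∃ j : ℕ, x = a + j := ⟨(x - a).toNat, by omega⟩
    exact hfwd j
  · obtain ⟨j, rfl⟩ : ∃ j : ℕ, x = a + n - 1 - j := ⟨(a + n - 1 - x).toNat, by omega⟩
    simpa using hbwd j

theorem exists_mem_intSolSpace_window (hcn : c n ≠ 0) (hc0 : c 0 ≠ 0) (a : ℤ) (w : Fin n → K) :
    ∃ ν ∈ intSolSpace n c, ∀ i : Fin n, ν (a + i) = w i := by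
  set E := forwardRecurrence n c
  set E' := forwardRecurrence n fun d => c (n - d)
  -- Glue the forward continuation of `w` to the reflected-recurrence continuation of its
  -- reversal; the two agree on the window, and every length-`n + 1` stencil lies in one half.
  let ν : ℤ → K := fun x => if a ≤ x then E.mkSol w (x - a).toNat
    else E'.mkSol (w ∘ Fin.rev) (a + n - 1 - x).toNat
  have hfwd (j : ℕ) : ν (a + j) = E.mkSol w j := by simp [ν]
  have hbwd (j : ℕ) : ν (a + n - 1 - j) = E'.mkSol (w ∘ Fin.rev) j := by
    by_cases hj : j < n
    · simp only [ν, if_pos (show a ≤ a + n - 1 - j by omega),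
        show (a + n - 1 - j - a).toNat = n - (j + 1) by omega]
      exact (E.mkSol_eq_init w (Fin.rev ⟨j, hj⟩)).trans
        (E'.mkSol_eq_init (w ∘ Fin.rev) ⟨j, hj⟩).symm
    · simp [ν, show ¬a ≤ a + n - 1 - j by omega]
  refine ⟨ν, fun m => ?_, fun i => by rw [hfwd]; exact E.mkSol_eq_init w i⟩
  rcases le_or_gt a m with hm | hm
  · exact sum_eq_zero_of_isSolution hcn (E.is_sol_mkSol w) hfwd hm
  · have h := sum_eq_zero_of_isSolution (by simpa using hc0) (E'.is_sol_mkSol _)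
      (ν := fun x => ν (a + n - 1 - x)) (a := 0) (by simpa using hbwd)
      (show 0 ≤ a - 1 - m by omega)
    rwa [sum_range_reflect_eq, show a + n - 1 - (a - 1 - m) - n = m by ring] at h

theorem rank_comap_mulLeft_intSolSpace (hcn : c n ≠ 0) (hc0 : c 0 ≠ 0) {d : ℤ → K} {a : ℤ}
    (hd : ∀ x, d x = 0 → a ≤ x ∧ x < a + n) :
    Module.rank K ((intSolSpace n c).comap (LinearMap.mulLeft K d)) = n := by
  set S := (intSolSpace n c).comap (LinearMap.mulLeft K d)
  let window : S →ₗ[K] Fin n → K :=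
    (LinearMap.pi fun i : Fin n => LinearMap.proj (a + i)) ∘ₗ S.subtype
  have hinj : Function.Injective window := by
    rw [← LinearMap.ker_eq_bot, LinearMap.ker_eq_bot']
    rintro ⟨μ, hμ⟩ h
    have hw (i : Fin n) : μ (a + i) = 0 := congrFun h i
    have hdμ : d * μ = 0 :=
      intSolSpace_eq_zero_of_window hcn hc0 hμ (a := a) fun i hi => by simp [hw ⟨i, hi⟩]
    ext x
    by_cases hx : d x = 0
    · obtain ⟨hax, hxa⟩ := hd x hx
      obtain ⟨i, rfl⟩ : ∃ i : Fin n, x = a + i := ⟨⟨(x - a).toNat, by omega⟩, by simp; omega⟩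
      exact hw i
    · exact (mul_eq_zero.mp (congrFun hdμ x)).resolve_left hx
  have hsurj : Function.Surjective window := by
    intro w
    obtain ⟨ν, hν, hνw⟩ := exists_mem_intSolSpace_window hcn hc0 a fun i => d (a + i) * w i
    let μ : ℤ → K := fun x =>
      if h : a ≤ x ∧ x < a + n then w ⟨(x - a).toNat, by omega⟩ else ν x / d x
    have hdμ : d * μ = ν := by
      ext x
      by_cases h : a ≤ x ∧ x < a + n
      · obtain ⟨i, rfl⟩ : ∃ i : Fin n, x = a + i :=
          ⟨⟨(x - a).toNat, by omega⟩, by simp; omega⟩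
        simp [μ, hνw]
      · simp [μ, h, mul_div_cancel₀ _ (mt (hd x) h)]
    refine ⟨⟨μ, show d * μ ∈ intSolSpace n c from hdμ ▸ hν⟩, funext fun i => ?_⟩
    simp [window, μ]
  rw [(LinearEquiv.ofBijective window ⟨hinj, hsurj⟩).rank_eq, rank_fin_fun]

end IntRecurrence

theorem laurentScale_apply (c : ℂ) (S : ℤ →₀ ℂ) (k : ℤ) : laurentScale c S k = c ^ k * S k := by
  simp [laurentScale, Finsupp.sum_apply, Finsupp.single_apply]
  tauto

theorem sum_laurentScale {M : Type*} [AddCommMonoid M] (c : ℂ) (S : ℤ →₀ ℂ) {g : ℤ → ℂ → M}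
    (hg : ∀ k, g k 0 = 0) : (laurentScale c S).sum g = ∑ k ∈ S.support, g k (c ^ k * S k) := by
  have hsub : (laurentScale c S).support ⊆ S.support := fun k => by
    simp only [Finsupp.mem_support_iff, laurentScale_apply]
    exact right_ne_zero_of_mul
  simp only [Finsupp.sum_of_support_subset _ hsub g fun k _ => hg k, laurentScale_apply]

theorem map_laurentMul (T : (ℤ →₀ ℂ) →ₗ[ℂ] ℂ) (A B : ℤ →₀ ℂ) :
    T (laurentMul A B) =
      A.sum fun j a => B.sum fun m b => a * b * T (Finsupp.single (j + m) 1) := by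
  simp only [laurentMul, map_finsuppSum]
  refine Finsupp.sum_congr fun j _ => Finsupp.sum_congr fun m _ => ?_
  rw [← Finsupp.smul_single_one (j + m) (_ * _), map_smul, smul_eq_mul]

noncomputable def twistFactor (q t : ℂ) (x : ℤ) : ℂ := q ^ (-x) - t * q ^ x

theorem map_twistedDifference (T : (ℤ →₀ ℂ) →ₗ[ℂ] ℂ) {q : ℂ} (hq : q ≠ 0) (t : ℂ) (P R : ℤ →₀ ℂ) :
    T (laurentMul (laurentScale q⁻¹ P) (laurentScale q⁻¹ R)
        - t • laurentMul (laurentScale q P) (laurentScale q R)) =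
      ∑ m ∈ R.support, R m * ∑ j ∈ P.support,
        P j * (twistFactor q t (j + m) * T (Finsupp.single (j + m) 1)) := by
  simp only [map_sub, map_smul, map_laurentMul, smul_eq_mul]
  rw [sum_laurentScale _ _ (by simp), sum_laurentScale _ _ (by simp)]
  simp only [sum_laurentScale _ _ (g := fun m b => _ * b * _) (by simp)]
  simp only [mul_sum, ← sum_sub_distrib]
  rw [sum_comm]
  refine sum_congr rfl fun m _ => sum_congr rfl fun j _ => ?_
  rw [twistFactor, inv_zpow', inv_zpow', neg_add, zpow_add₀ hq, zpow_add₀ hq]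
  ring

theorem sum_support_mul_eq_sum_range {R : Type*} [Semiring R] {P : ℤ →₀ R} {l : ℤ} {n : ℕ}
    (hsupp : ∀ j, P j ≠ 0 → l ≤ j ∧ j ≤ l + n) (ν : ℤ → R) (m : ℤ) :
    ∑ j ∈ P.support, P j * ν (j + m) = ∑ i ∈ range (n + 1), P (l + i) * ν (m + l + i) := by
  have hsub : P.support ⊆ (range (n + 1)).image fun i : ℕ => l + i := fun j hj => by
    obtain ⟨h1, h2⟩ := hsupp j (Finsupp.mem_support_iff.mp hj)
    exact mem_image.mpr ⟨(j - l).toNat, by simp; omega, by omega⟩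
  rw [sum_subset hsub fun j _ hj => by simp [Finsupp.notMem_support_iff.mp hj],
    sum_image fun _ _ _ _ h => by simpa using h]
  exact sum_congr rfl fun i _ => by ring_nf

noncomputable def twistedTraces (q t : ℂ) (P : ℤ →₀ ℂ) : Submodule ℂ ((ℤ →₀ ℂ) →ₗ[ℂ] ℂ) :=
  ⨅ R : ℤ →₀ ℂ, LinearMap.ker
    (LinearMap.applyₗ
      (laurentMul (laurentScale q⁻¹ P) (laurentScale q⁻¹ R)
        - t • laurentMul (laurentScale q P) (laurentScale q R)) :
      ((ℤ →₀ ℂ) →ₗ[ℂ] ℂ) →ₗ[ℂ] ℂ)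

theorem twistedTraces_eq_comap {q : ℂ} (hq : q ≠ 0) (t : ℂ) {P : ℤ →₀ ℂ} {l : ℤ} {n : ℕ}
    (hsupp : ∀ j, P j ≠ 0 → l ≤ j ∧ j ≤ l + n) :
    twistedTraces q t P = ((intSolSpace n fun i => P (l + i)).comap
      (LinearMap.mulLeft ℂ (twistFactor q t))).comap (Finsupp.llift ℂ ℂ ℂ ℤ).symm.toLinearMap := by
  ext T
  set ν := twistFactor q t * (Finsupp.llift ℂ ℂ ℂ ℤ).symm T
  have hν (x : ℤ) : ν x = twistFactor q t x * T (Finsupp.single x 1) := rfl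
  have hmem : T ∈ twistedTraces q t P ↔
      ∀ R : ℤ →₀ ℂ, ∑ m ∈ R.support, R m * ∑ j ∈ P.support, P j * ν (j + m) = 0 := by
    simp only [twistedTraces, Submodule.mem_iInf, LinearMap.mem_ker,
      LinearMap.applyₗ_apply_apply, map_twistedDifference T hq, hν]
  have hmonomial : (∀ R : ℤ →₀ ℂ, ∑ m ∈ R.support, R m * ∑ j ∈ P.support, P j * ν (j + m) = 0) ↔
      ∀ m, ∑ j ∈ P.support, P j * ν (j + m) = 0 := by
    refine ⟨fun h m => by simpa using h (Finsupp.single m 1), fun h R => ?_⟩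
    simp [h]
  change _ ↔ ν ∈ intSolSpace n fun i => P (l + i)
  rw [hmem, hmonomial, mem_intSolSpace]
  simp only [sum_support_mul_eq_sum_range hsupp]
  refine ⟨fun h m => ?_, fun h m => h (m + l)⟩
  simpa using h (m - l)

theorem zpow_ne_one_of_pow_ne_one {G : Type*} [DivisionMonoid G] {q : G}
    (hq : ∀ m : ℕ, m ≠ 0 → q ^ m ≠ 1) {z : ℤ} (hz : z ≠ 0) : q ^ z ≠ 1 := by
  cases z with
  | ofNat m => simpa using hq m (by simpa using hz)
  | negSucc m => simpa [zpow_negSucc] using hq (m + 1) m.succ_ne_zero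

theorem eq_of_twistFactor_eq_zero {q : ℂ} (hq : q ≠ 0) (hqru : ∀ m : ℕ, m ≠ 0 → q ^ m ≠ 1)
    {t : ℂ} {x y : ℤ} (hx : twistFactor q t x = 0) (hy : twistFactor q t y = 0) : x = y := by
  have ht (z : ℤ) (hz : twistFactor q t z = 0) : t = q ^ (-(2 * z)) := by
    rw [twistFactor, sub_eq_zero] at hz
    rw [show -(2 * z) = -z - z by ring, zpow_sub₀ hq]
    exact eq_div_of_mul_eq (zpow_ne_zero z hq) hz.symm
  by_contra hne
  refine zpow_ne_one_of_pow_ne_one hqru (z := -(2 * x) - -(2 * y)) (by omega) ?_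
  rw [zpow_sub₀ hq, ← ht x hx, ht y hy, div_self (zpow_ne_zero _ hq)]

theorem dim_twisted_traces_general (q t : ℂ) (hq0 : q ≠ 0)
    (hqru : ∀ m : ℕ, m ≠ 0 → q ^ m ≠ 1)
    (P : ℤ →₀ ℂ) (k l : ℤ) (htop : P k ≠ 0) (hbot : P l ≠ 0)
    (hsupp : ∀ m : ℤ, P m ≠ 0 → l ≤ m ∧ m ≤ k)
    (n : ℕ) (hn : (n : ℤ) = k - l) (hnpos : 0 < n) :
    Module.rank ℂ
      ↥(⨅ R : ℤ →₀ ℂ, LinearMap.ker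
        (LinearMap.applyₗ
          (laurentMul (laurentScale q⁻¹ P) (laurentScale q⁻¹ R)
            - t • laurentMul (laurentScale q P) (laurentScale q R)) :
          ((ℤ →₀ ℂ) →ₗ[ℂ] ℂ) →ₗ[ℂ] ℂ)) = n := by
  obtain rfl : k = l + n := by omega
  -- `twistFactor q t` has at most one zero, so a window of length `n ≥ 1` can contain it.
  obtain ⟨a, ha⟩ : ∃ a : ℤ, ∀ x, twistFactor q t x = 0 → a ≤ x ∧ x < a + n := by
    by_cases h : ∃ x₀, twistFactor q t x₀ = 0
    · obtain ⟨x₀, hx₀⟩ := h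
      exact ⟨x₀, fun x hx => by have := eq_of_twistFactor_eq_zero hq0 hqru hx hx₀; omega⟩
    · exact ⟨0, fun x hx => (h ⟨x, hx⟩).elim⟩
  change Module.rank ℂ (twistedTraces q t P) = n
  rw [twistedTraces_eq_comap hq0 t hsupp, Submodule.comap_equiv_eq_map_symm,
    LinearEquiv.rank_map_eq]
  exact rank_comap_mulLeft_intSolSpace (by simpa using htop) (by simpa using hbot) ha

theorem dim_twisted_traces (q t : ℂ) (hq0 : q ≠ 0) (hqabs0 : 0 < ‖q‖)
    (hqabs1 : ‖q‖ < 1) (hqru : ∀ m : ℕ, m ≠ 0 → q ^ m ≠ 1) (ht : t ≠ 0)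
    (P : ℤ →₀ ℂ) (k l : ℤ) (hkl : l ≤ k) (htop : P k ≠ 0) (hbot : P l ≠ 0)
    (hsupp : ∀ m : ℤ, P m ≠ 0 → l ≤ m ∧ m ≤ k)
    (n : ℕ) (hn : (n : ℤ) = k - l) (hnpos : 0 < n) :
    Module.rank ℂ
      ↥(⨅ R : ℤ →₀ ℂ, LinearMap.ker
        (LinearMap.applyₗ
          (laurentMul (laurentScale q⁻¹ P) (laurentScale q⁻¹ R)
            - t • laurentMul (laurentScale q P) (laurentScale q R)) :
          ((ℤ →₀ ℂ) →ₗ[ℂ] ℂ) →ₗ[ℂ] ℂ)) = n :=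
  dim_twisted_traces_general q t hq0 hqru P k l htop hbot hsupp n hn hnpos
end

section
/- The closure in C([0,1]) of the set {x ↦ R(e^{2πix})·conj(R(e^{2πix})) : R a Laurent polynomial with complex coefficients} is exactly the set of continuous functions f: [0,1] → ℝ that are nonnegative and satisfy f(0) = f(1). -/
/-!
Each `|R(e^{2πix})|²` is nonnegative with equal values at `0` and `1`, and both conditions are
closed. Conversely, such an `f` has a continuous square root, which descends to the circle
`ℝ/ℤ`. Trigonometric polynomials are dense in `C(ℝ/ℤ, ℂ)` (Stone–Weierstrass) and `g ↦ g * star g`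
is continuous, so `f` is a uniform limit of functions `|P|²` with `P` a trigonometric polynomial,
i.e. a Laurent polynomial evaluated at `e^{2πix}`.
-/

open Complex

/-- Evaluation of a Laurent polynomial (coefficient function `R : ℤ →₀ ℂ`,
representing `Σ_k R(k) z^k`) at a nonzero complex number. -/
noncomputable def laurentEval (R : ℤ →₀ ℂ) (z : ℂ) : ℂ :=
  R.sum fun k c => c * z ^ k

open scoped ComplexOrder

instance fact_zero_lt_one_real : Fact (0 < (1 : ℝ)) := ⟨one_pos⟩

lemma Complex.exists_nonneg_eq_ofReal_iff (z : ℂ) : (∃ r : ℝ, 0 ≤ r ∧ z = r) ↔ 0 ≤ z := by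
  refine ⟨fun ⟨r, hr, hz⟩ => hz ▸ zero_le_real.2 hr, fun hz => ?_⟩
  exact ⟨z.re, (nonneg_iff.1 hz).1, eq_re_of_ofReal_le (r := 0) (by simpa using hz)⟩

namespace unitInterval

def toAddCircle : C(unitInterval, AddCircle (1 : ℝ)) :=
  ⟨fun x => ((x : ℝ) : AddCircle (1 : ℝ)), by fun_prop⟩

lemma toAddCircle_apply (x : unitInterval) : toAddCircle x = ((x : ℝ) : AddCircle (1 : ℝ)) := rfl

lemma exists_comp_toAddCircle_eq {B : Type*} [TopologicalSpace B] (s : C(unitInterval, B))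
    (hs : s 0 = s 1) : ∃ F : C(AddCircle (1 : ℝ), B), F.comp toAddCircle = s := by
  set f : ℝ → B := s ∘ Set.projIcc 0 1 zero_le_one
  have hf : f 0 = f 1 := by simpa [f] using hs
  refine ⟨⟨AddCircle.liftIco 1 0 f, AddCircle.liftIco_zero_continuous hf
    (s.continuous.comp continuous_projIcc).continuousOn⟩, ?_⟩
  ext x
  have hfx : f x = s x := by simp [f, Set.projIcc_val]
  rcases x.2.2.lt_or_eq with hx | hx
  · exact (AddCircle.liftIco_zero_coe_apply ⟨x.2.1, hx⟩).trans hfx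
  · rw [ContinuousMap.comp_apply, ContinuousMap.coe_mk, toAddCircle_apply,
      ← AddCircle.liftIoc_eq_liftIco (by simpa using hf)]
    exact (AddCircle.liftIoc_zero_coe_apply ⟨by simp [hx], x.2.2⟩).trans hfx

lemma fourier_toAddCircle (n : ℤ) (x : unitInterval) :
    fourier n (toAddCircle x) = exp (2 * Real.pi * Complex.I * (x : ℝ)) ^ n := by
  rw [toAddCircle_apply, fourier_coe_apply, ← exp_int_mul]
  congr 1
  push_cast
  ring

lemma exists_laurentEval_of_mem_span_fourier {g : C(AddCircle (1 : ℝ), ℂ)}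
    (hg : g ∈ Submodule.span ℂ (Set.range fourier)) :
    ∃ R : ℤ →₀ ℂ, ∀ x,
      g (toAddCircle x) = laurentEval R (exp (2 * Real.pi * Complex.I * (x : ℝ))) := by
  obtain ⟨R, rfl⟩ := Finsupp.mem_span_range_iff_exists_finsupp.mp hg
  refine ⟨R, fun x => ?_⟩
  simp only [laurentEval, Finsupp.sum, ContinuousMap.coe_sum, Finset.sum_apply,
    ContinuousMap.coe_smul, Pi.smul_apply, smul_eq_mul, fourier_toAddCircle]

lemma exists_mulStar_comp_toAddCircle_eq {f : C(unitInterval, ℂ)} (hf : ∀ x, 0 ≤ f x)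
    (hper : f 0 = f 1) :
    ∃ G : C(AddCircle (1 : ℝ), ℂ), (G * star G).comp toAddCircle = f := by
  obtain ⟨F, hF⟩ := exists_comp_toAddCircle_eq f hper
  refine ⟨⟨fun θ => (√(F θ).re : ℂ), by fun_prop⟩, ?_⟩
  ext x
  have hFx : F (toAddCircle x) = f x := congr($hF x)
  calc _ = (((√(f x).re) ^ 2 : ℝ) : ℂ) := by simp [hFx, sq]
    _ = f x := by
      rw [Real.sq_sqrt (Complex.nonneg_iff.1 (hf x)).1, ← Complex.eq_re_of_ofReal_le (r := 0)]
      simpa using hf x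

end unitInterval

open unitInterval

lemma mulStar_comp_toAddCircle_mem_closure (g : C(AddCircle (1 : ℝ), ℂ)) :
    (g * star g).comp toAddCircle ∈ closure {f : C(unitInterval, ℂ) | ∃ R : ℤ →₀ ℂ,
      ∀ x : unitInterval, f x = laurentEval R (exp (2 * Real.pi * Complex.I * (x : ℝ))) *
        (starRingEnd ℂ) (laurentEval R (exp (2 * Real.pi * Complex.I * (x : ℝ))))} := by
  set Ψ : C(AddCircle (1 : ℝ), ℂ) → C(unitInterval, ℂ) := fun g => (g * star g).comp toAddCircle
  have hΨ : Continuous Ψ := (ContinuousMap.continuous_precomp _).comp (by fun_prop)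
  have hdense :
      Dense (Submodule.span ℂ (Set.range (fourier (T := 1))) : Set C(AddCircle (1 : ℝ), ℂ)) :=
    Submodule.dense_iff_topologicalClosure_eq_top.2 span_fourier_closure_eq_top
  refine closure_mono ?_ (image_closure_subset_closure_image hΨ ⟨g, hdense g, rfl⟩)
  rintro _ ⟨h, hh, rfl⟩
  obtain ⟨R, hR⟩ := exists_laurentEval_of_mem_span_fourier hh
  exact ⟨R, fun x => by simp [Ψ, hR]⟩

theorem closure_of_squares :
    closure {f : C(unitInterval, ℂ) | ∃ R : ℤ →₀ ℂ, ∀ x : unitInterval,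
        f x = laurentEval R (Complex.exp (2 * Real.pi * Complex.I * (x : ℝ))) *
          (starRingEnd ℂ) (laurentEval R (Complex.exp (2 * Real.pi * Complex.I * (x : ℝ))))} =
      {f : C(unitInterval, ℂ) |
        (∀ x : unitInterval, ∃ r : ℝ, 0 ≤ r ∧ f x = (r : ℂ)) ∧ f 0 = f 1} := by
  simp_rw [Complex.exists_nonneg_eq_ofReal_iff]
  refine Set.Subset.antisymm (closure_minimal ?_ ?_) ?_
  · rintro f ⟨R, hR⟩
    refine ⟨fun x => hR x ▸ mul_star_self_nonneg _, ?_⟩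
    simp [hR 0, hR 1, Complex.exp_two_pi_mul_I]
  · simp only [Set.ofPred_and, Set.ofPred_forall]
    exact (isClosed_iInter fun x => isClosed_le continuous_const (continuous_eval_const x)).inter
      (isClosed_eq (continuous_eval_const 0) (continuous_eval_const 1))
  · rintro f ⟨hf, hper⟩
    obtain ⟨G, rfl⟩ := exists_mulStar_comp_toAddCircle_eq hf hper
    exact mulStar_comp_toAddCircle_mem_closure G
end

section
/- Let 0<|q|<1, let a ∈ ℂ with |q|² < |a| < 1, and set b = q²/a. Suppose w is a meromorphic function on ℂ∖{0} with w(q²x) = w(x), whose only poles are simple poles at the points q^{2k}a and q^{2k}b (k ∈ ℤ), with residues A at a and B at b normalized so that A/a = 1 and B/b = −1. Then the coefficient of z^{−i−1} in the Laurent expansion of w on the annulus containing S¹ equals (a^{i+1} − q^{2i+2} a^{−i−1})/(1 − q^{2(i+1)}) for every integer i ≥ 0. -/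
/-!
On the annulus `max ‖a‖ ‖b‖ < ‖z‖ < min ‖a‖ ‖b‖ / ‖q‖²` the function `w` is holomorphic, so it
has a Laurent expansion there whose coefficients are `(2πi)⁻¹ ∮_{‖z‖ = 1} z^(-k-1) w(z) dz`.
For `k = -i-1` compare the circles `‖z‖ = 1` and `‖z‖ = ‖q‖²`: between them `z^i w(z)` has only
the simple poles `a` and `b`, with residues `a^(i+1)` and `-b^(i+1)`, while the substitution
`z ↦ q² z` and the invariance `w(q² z) = w(z)` make the integral over `‖z‖ = ‖q‖²` equal to
`q^(2i+2)` times the one over `‖z‖ = 1`. Hence `(1 - q^(2i+2)) c_{-i-1} = a^(i+1) - b^(i+1)`,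
and `b = q²/a` gives the formula.
-/

open Complex Filter Set Metric Function Asymptotics MeasureTheory
open scoped Topology Real

section

variable {E : Type*} [NormedAddCommGroup E] [NormedSpace ℂ E]

theorem circleIntegral_comp_mul_left (f : ℂ → E) (α : ℂ) (ρ : ℝ) :
    (∮ z in C(0, ‖α‖ * ρ), f z) = α • ∮ z in C(0, ρ), f (α * z) := by
  have hα : circleMap 0 ‖α‖ α.arg = α := by rw [circleMap_zero, norm_mul_exp_arg_mul_I]
  have hrot : ∀ θ, α * circleMap 0 ρ θ = circleMap 0 (‖α‖ * ρ) (α.arg + θ) := fun θ => by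
    rw [← circleMap_zero_mul, hα]
  set F : ℝ → E := fun θ => (circleMap 0 (‖α‖ * ρ) θ * I) • f (circleMap 0 (‖α‖ * ρ) θ)
  have hF : Periodic F (2 * π) := fun θ => by simp only [F, periodic_circleMap 0 _ θ]
  simp only [circleIntegral, deriv_circleMap, ← intervalIntegral.integral_smul, smul_smul,
    ← mul_assoc, hrot]
  rw [intervalIntegral.integral_comp_add_left (f := F), add_zero,
    hF.intervalIntegral_add_eq α.arg 0, zero_add]

theorem hasSum_circleIntegral_sub_inv_smul_of_lt_norm {f : ℂ → E} {R : ℝ} {w : ℂ}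
    (hf : CircleIntegrable f 0 R) (hR : 0 < R) (hw : R < ‖w‖) :
    HasSum (fun n : ℕ => ∮ z in C(0, R), (z / w) ^ n • w⁻¹ • f z)
      (-∮ z in C(0, R), (z - w)⁻¹ • f z) := by
  have hw0 : 0 < ‖w‖ := hR.trans hw
  have hRw : R / ‖w‖ ∈ Ico (0 : ℝ) 1 := ⟨div_nonneg hR.le hw0.le, (div_lt_one hw0).2 hw⟩
  rw [circleIntegral, ← intervalIntegral.integral_neg]
  refine intervalIntegral.hasSum_integral_of_dominated_convergence
    (fun n θ => ‖f (circleMap 0 R θ)‖ * (R / ‖w‖) ^ n * (R / ‖w‖))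
    (fun n => ?_) (fun n => ?_) ?_ ?_ ?_
  · simp only [deriv_circleMap]
    apply_rules [AEStronglyMeasurable.smul, hf.def'.1] <;> apply Measurable.aestronglyMeasurable
    all_goals fun_prop
  · refine Eventually.of_forall fun θ _ => le_of_eq ?_
    simp [norm_smul, abs_of_pos hR, div_eq_mul_inv]
    ring
  · exact Eventually.of_forall fun _ _ =>
      ((summable_geometric_of_lt_one hRw.1 hRw.2).mul_left _).mul_right _
  · simpa only [tsum_mul_left, tsum_mul_right, tsum_geometric_of_lt_one hRw.1 hRw.2] using
      (hf.norm.mul_continuousOn continuousOn_const).mul_continuousOn continuousOn_const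
  · refine Eventually.of_forall fun θ _ => ?_
    have hz : ‖circleMap 0 R θ / w‖ < 1 := by simpa [abs_of_pos hR] using hRw.2
    rw [← smul_neg, ← neg_smul]
    refine HasSum.const_smul _ ?_
    simp only [smul_smul]
    refine HasSum.smul_const ?_ _
    have hw0' : w ≠ 0 := norm_pos_iff.1 hw0
    rw [← neg_sub, inv_neg, neg_neg, ← div_mul_cancel₀ (w - _) hw0', sub_div, div_self hw0',
      mul_inv]
    exact (hasSum_geometric_of_norm_lt_one hz).mul_right w⁻¹

noncomputable def laurentCoeff (f : ℂ → E) (r : ℝ) (k : ℤ) : E :=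
  (2 * π * I)⁻¹ • ∮ z in C(0, r), z ^ (-k - 1) • f z

theorem laurentCoeff_neg_natCast_sub_one (f : ℂ → E) (r : ℝ) (n : ℕ) :
    laurentCoeff f r (-(n : ℤ) - 1) = (2 * π * I)⁻¹ • ∮ z in C(0, r), z ^ n • f z := by
  simp only [laurentCoeff, show -(-(n : ℤ) - 1) - 1 = n by ring, zpow_natCast]

theorem hasSum_laurentCoeff_natCast {f : ℂ → E} {R : ℝ} {x : ℂ} (hf : CircleIntegrable f 0 R)
    (hx : ‖x‖ < R) :
    HasSum (fun n : ℕ => x ^ (n : ℤ) • laurentCoeff f R n)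
      ((2 * π * I)⁻¹ • ∮ z in C(0, R), (z - x)⁻¹ • f z) := by
  have h := (hasSum_two_pi_I_cauchyPowerSeries_integral hf hx).const_smul (2 * π * I)⁻¹
  simp only [sub_zero, zero_add] at h
  refine h.congr_fun fun n => ?_
  rw [laurentCoeff, smul_comm, ← circleIntegral.integral_smul]
  congr 2 with z
  rw [smul_smul, smul_smul, show -(n : ℤ) - 1 = -((n + 1 : ℕ) : ℤ) by push_cast; ring,
    zpow_neg, zpow_natCast, zpow_natCast, div_pow, pow_succ]
  congr 1
  ring

theorem hasSum_laurentCoeff_neg_natCast_add_one {f : ℂ → E} {ρ : ℝ} {x : ℂ}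
    (hf : CircleIntegrable f 0 ρ) (hρ : 0 < ρ) (hx : ρ < ‖x‖) :
    HasSum (fun n : ℕ => x ^ (-((n : ℤ) + 1)) • laurentCoeff f ρ (-((n : ℤ) + 1)))
      ((2 * π * I)⁻¹ • -∮ z in C(0, ρ), (z - x)⁻¹ • f z) := by
  refine ((hasSum_circleIntegral_sub_inv_smul_of_lt_norm hf hρ hx).const_smul
    (2 * π * I)⁻¹).congr_fun fun n => ?_
  rw [laurentCoeff, smul_comm, ← circleIntegral.integral_smul]
  congr 2 with z
  rw [smul_smul, smul_smul, neg_neg, add_sub_cancel_right, zpow_natCast, zpow_neg,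
    ← Nat.cast_succ, zpow_natCast, div_pow, pow_succ]
  congr 1
  ring

variable [CompleteSpace E]

theorem exists_differentiableOn_eqOn_sub_inv_smul {f : ℂ → E} {U : Set ℂ} {p : ℂ} {A : E}
    (hU : IsOpen U) (hp : p ∈ U) (hf : DifferentiableOn ℂ f (U \ {p}))
    (hA : Tendsto (fun z => (z - p) • f z) (𝓝[≠] p) (𝓝 A)) :
    ∃ g, DifferentiableOn ℂ g U ∧ EqOn g (fun z => f z - (z - p)⁻¹ • A) (U \ {p}) := by
  set G : ℂ → E := fun z => f z - (z - p)⁻¹ • A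
  have hG : DifferentiableOn ℂ G (U \ {p}) := fun z hz =>
    (hf z hz).sub <| ((differentiableAt_id.sub_const p).inv
      (sub_ne_zero.2 hz.2)).differentiableWithinAt.smul_const A
  have hlin : Tendsto (fun z : ℂ => (z - p) • G p) (𝓝[≠] p) (𝓝 0) := by
    simpa using (((tendsto_id (x := 𝓝 p)).sub_const p).smul_const (G p)).mono_left
      nhdsWithin_le_nhds
  have hG0 : Tendsto (fun z => (z - p) • (G z - G p)) (𝓝[≠] p) (𝓝 0) := by
    refine ((hA.sub_const A).sub hlin).congr' ?_ |>.trans_eq (by simp)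
    filter_upwards [self_mem_nhdsWithin] with z hz
    simp [G, smul_sub, smul_smul, mul_inv_cancel₀ (sub_ne_zero.2 hz)]
  have ho : (fun z => G z - G p) =o[𝓝[≠] p] fun z => (z - p)⁻¹ := by
    refine ((isBigO_refl (fun z : ℂ => (z - p)⁻¹) _).smul_isLittleO
      ((isLittleO_one_iff ℂ).2 hG0)).congr' ?_ (by simp)
    filter_upwards [self_mem_nhdsWithin] with z hz
    simp [smul_smul, inv_mul_cancel₀ (sub_ne_zero.2 hz)]
  exact ⟨_, differentiableOn_update_limUnder_of_isLittleO (hU.mem_nhds hp) hG ho,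
    fun z hz => update_of_ne hz.2 _ _⟩

theorem exists_differentiableOn_eqOn_sub_sum_inv_smul {f A : ℂ → E} {U : Set ℂ} {s : Finset ℂ}
    (hU : IsOpen U) (hsU : ↑s ⊆ U) (hf : DifferentiableOn ℂ f (U \ s))
    (hA : ∀ p ∈ s, Tendsto (fun z => (z - p) • f z) (𝓝[≠] p) (𝓝 (A p))) :
    ∃ g, DifferentiableOn ℂ g U ∧ EqOn g (fun z => f z - ∑ p ∈ s, (z - p)⁻¹ • A p) (U \ s) := by
  classical
  induction s using Finset.induction_on generalizing U with
  | empty => exact ⟨f, by simpa using hf, fun z _ => by simp⟩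
  | insert p s hps ih =>
    simp only [Finset.coe_insert, insert_subset_iff] at hsU
    obtain ⟨g, hg, hgf⟩ := ih (U := U \ {p}) (hU.sdiff isClosed_singleton)
      (fun q hq => ⟨hsU.2 hq, fun h => hps (mem_singleton_iff.1 h ▸ hq)⟩)
      (hf.mono fun z hz => ⟨hz.1.1, by simpa [not_or] using ⟨hz.1.2, hz.2⟩⟩)
      fun q hq => hA q (Finset.mem_insert_of_mem hq)
    have hpole : Tendsto (fun z => (z - p) • g z) (𝓝[≠] p) (𝓝 (A p)) := by
      have hsum : Tendsto (fun z => ∑ q ∈ s, ((z - p) * (z - q)⁻¹) • A q) (𝓝[≠] p) (𝓝 0) := by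
        refine (tendsto_finsetSum s (a := fun _ => (0 : E)) fun q hq => ?_).trans_eq (by simp)
        have hqp : p - q ≠ 0 := sub_ne_zero.2 (ne_of_mem_of_not_mem hq hps).symm
        have hc : ContinuousAt (fun z => (z - p) * (z - q)⁻¹) p := by fun_prop (disch := exact hqp)
        simpa using (hc.tendsto.smul_const (A q)).mono_left nhdsWithin_le_nhds
      refine ((hA p (Finset.mem_insert_self p s)).sub hsum).congr' ?_ |>.trans_eq (by rw [sub_zero])
      have hU' : ∀ᶠ z in 𝓝[≠] p, z ∈ U := nhdsWithin_le_nhds (hU.mem_nhds hsU.1)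
      have hs' : ∀ᶠ z in 𝓝[≠] p, z ∉ s := nhdsWithin_le_nhds
        (s.finite_toSet.isClosed.isOpen_compl.mem_nhds hps)
      filter_upwards [hU', self_mem_nhdsWithin, hs'] with z hzU hzp hzs
      simp [hgf ⟨⟨hzU, hzp⟩, hzs⟩, smul_sub, Finset.smul_sum, smul_smul]
    obtain ⟨g', hg', hg'g⟩ := exists_differentiableOn_eqOn_sub_inv_smul hU hsU.1 hg hpole
    refine ⟨g', hg', fun z ⟨hzU, hz⟩ => ?_⟩
    simp only [Finset.coe_insert, mem_insert_iff, not_or] at hz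
    simp only [hg'g ⟨hzU, hz.1⟩, hgf ⟨⟨hzU, hz.1⟩, hz.2⟩, Finset.sum_insert hps]
    abel

theorem circleIntegral_sub_inv_of_lt_norm {p : ℂ} {r : ℝ} (hr : 0 ≤ r) (hp : r < ‖p‖) :
    (∮ z in C(0, r), (z - p)⁻¹) = 0 := by
  refine DiffContOnCl.circleIntegral_eq_zero hr <| DifferentiableOn.diffContOnCl_ball (U := {p}ᶜ)
    (fun z hz => ((differentiableAt_id.sub_const p).inv (sub_ne_zero.2 hz)).differentiableWithinAt)
    fun z hz hzp => ?_
  rw [mem_closedBall_zero_iff, mem_singleton_iff.1 hzp] at hz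
  exact hz.not_gt hp

theorem circleIntegral_sub_sum_inv_smul {f A : ℂ → E} {s : Finset ℂ} {r : ℝ} (hr : 0 < r)
    (hf : ContinuousOn f (sphere 0 r)) (hs : ∀ p ∈ s, ‖p‖ ≠ r) :
    (∮ z in C(0, r), (f z - ∑ p ∈ s, (z - p)⁻¹ • A p)) =
      (∮ z in C(0, r), f z) - ∑ p ∈ s, (∮ z in C(0, r), (z - p)⁻¹) • A p := by
  have hinv : ∀ p ∈ s, ContinuousOn (fun z => (z - p)⁻¹ • A p) (sphere (0 : ℂ) r) :=
    fun p hp => ((continuousOn_id.sub continuousOn_const).inv₀ fun z hz => sub_ne_zero.2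
      fun h : z = p => hs p hp (h ▸ mem_sphere_zero_iff_norm.1 hz)).smul continuousOn_const
  rw [circleIntegral.integral_sub (hf.circleIntegrable hr.le)
      ((continuousOn_finsetSum s hinv).circleIntegrable hr.le),
    circleIntegral.integral_fun_sum fun p hp => (hinv p hp).circleIntegrable hr.le]
  simp only [circleIntegral.integral_smul_const]

theorem circleIntegral_sub_circleIntegral_eq_sum_residues {f A : ℂ → E} {U : Set ℂ}
    {s : Finset ℂ} {ρ R : ℝ} (hU : IsOpen U) (hρ : 0 < ρ) (hρR : ρ ≤ R)
    (hann : closedBall (0 : ℂ) R \ ball 0 ρ ⊆ U) (hs : ↑s ⊆ ball (0 : ℂ) R \ closedBall 0 ρ)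
    (hf : DifferentiableOn ℂ f (U \ s))
    (hA : ∀ p ∈ s, Tendsto (fun z => (z - p) • f z) (𝓝[≠] p) (𝓝 (A p))) :
    (∮ z in C(0, R), f z) - (∮ z in C(0, ρ), f z) = (2 * π * I) • ∑ p ∈ s, A p := by
  have hopen : ball (0 : ℂ) R \ closedBall 0 ρ ⊆ closedBall 0 R \ ball 0 ρ :=
    sdiff_subset_sdiff ball_subset_closedBall ball_subset_closedBall
  have hsR : ∀ p ∈ s, ‖p‖ < R := fun p hp => mem_ball_zero_iff.1 (hs hp).1
  have hsρ : ∀ p ∈ s, ρ < ‖p‖ := fun p hp => lt_of_not_ge fun h => (hs hp).2 (by simpa using h)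
  obtain ⟨g, hg, hgf⟩ := exists_differentiableOn_eqOn_sub_sum_inv_smul hU
    (hs.trans (hopen.trans hann)) hf hA
  have hcircle : ∀ r ∈ Icc ρ R, (∀ p ∈ s, ‖p‖ ≠ r) → (∮ z in C(0, r), g z) =
      (∮ z in C(0, r), f z) - ∑ p ∈ s, (∮ z in C(0, r), (z - p)⁻¹) • A p := by
    intro r hr hsr
    have hrU : ∀ z ∈ sphere (0 : ℂ) r, z ∈ U \ s := fun z hz => by
      rw [mem_sphere_zero_iff_norm] at hz
      exact ⟨hann ⟨by simpa [hz] using hr.2, by simpa [hz] using hr.1⟩,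
        fun hzs => hsr z hzs hz⟩
    rw [circleIntegral.integral_congr (hρ.le.trans hr.1) fun z hz => hgf (hrU z hz),
      circleIntegral_sub_sum_inv_smul (hρ.trans_le hr.1) (hf.continuousOn.mono hrU) hsr]
  have hCauchy := circleIntegral_eq_of_differentiable_on_annulus_off_countable hρ hρR
    countable_empty (hg.continuousOn.mono hann)
    fun z hz => hg.differentiableAt (hU.mem_nhds (hann (hopen hz.1)))
  have hinner : ∑ p ∈ s, (∮ z in C(0, R), (z - p)⁻¹) • A p = (2 * π * I) • ∑ p ∈ s, A p := by
    rw [Finset.smul_sum]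
    exact Finset.sum_congr rfl fun p hp => by
      rw [circleIntegral.integral_sub_inv_of_mem_ball (mem_ball_zero_iff.2 (hsR p hp))]
  have houter : ∑ p ∈ s, (∮ z in C(0, ρ), (z - p)⁻¹) • A p = 0 :=
    Finset.sum_eq_zero fun p hp => by
      rw [circleIntegral_sub_inv_of_lt_norm hρ.le (hsρ p hp), zero_smul]
  rw [hcircle R ⟨hρR, le_rfl⟩ fun p hp => (hsR p hp).ne,
    hcircle ρ ⟨le_rfl, hρR⟩ fun p hp => (hsρ p hp).ne', hinner, houter, sub_zero] at hCauchy
  rw [← hCauchy, sub_sub_cancel]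

section annulus

variable {f : ℂ → E} {ρ R : ℝ}

theorem closedBall_sdiff_ball_subset_ball_sdiff_closedBall {r r' : ℝ} (hr : r ∈ Ioo ρ R)
    (hr' : r' ∈ Ioo ρ R) : closedBall (0 : ℂ) r' \ ball 0 r ⊆ ball 0 R \ closedBall 0 ρ :=
  fun _ ⟨h1, h2⟩ => ⟨mem_ball_zero_iff.2 ((mem_closedBall_zero_iff.1 h1).trans_lt hr'.2),
    fun h => h2 (mem_ball_zero_iff.2 ((mem_closedBall_zero_iff.1 h).trans_lt hr.1))⟩

theorem laurentCoeff_eq_of_mem_Ioo (hf : DifferentiableOn ℂ f (ball 0 R \ closedBall 0 ρ))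
    (hρ : 0 ≤ ρ) {r r' : ℝ} (hr : r ∈ Ioo ρ R) (hr' : r' ∈ Ioo ρ R) :
    laurentCoeff f r = laurentCoeff f r' := by
  wlog h : r ≤ r' generalizing r r'
  · exact (this hr' hr (le_of_not_ge h)).symm
  funext k
  have hg : DifferentiableOn ℂ (fun z => z ^ (-k - 1) • f z) (ball 0 R \ closedBall 0 ρ) :=
    fun z hz => by
      have hz0 : z ≠ 0 := fun h => hz.2 (by simp [h, hρ])
      exact ((differentiableAt_zpow.2 (Or.inl hz0)).differentiableWithinAt).smul (hf z hz)
  have := circleIntegral_sub_circleIntegral_eq_sum_residues (s := ∅) (A := 0)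
    (isOpen_ball.sdiff isClosed_closedBall) (hρ.trans_lt hr.1) h
    (closedBall_sdiff_ball_subset_ball_sdiff_closedBall hr hr') (by simp) (by simpa using hg)
    (by simp)
  rw [laurentCoeff, laurentCoeff, ← sub_eq_zero.1 (this.trans (by simp))]

theorem circleIntegral_sub_inv_smul_sub_circleIntegral_sub_inv_smul
    (hf : DifferentiableOn ℂ f (ball 0 R \ closedBall 0 ρ)) (hρ : 0 ≤ ρ) {r r' : ℝ}
    (hr : r ∈ Ioo ρ R) (hr' : r' ∈ Ioo ρ R) {x : ℂ} (hx : ‖x‖ ∈ Ioo r r') :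
    (∮ z in C(0, r'), (z - x)⁻¹ • f z) - (∮ z in C(0, r), (z - x)⁻¹ • f z) =
      (2 * π * I) • f x := by
  have hU : IsOpen (ball (0 : ℂ) R \ closedBall 0 ρ) := isOpen_ball.sdiff isClosed_closedBall
  have hxU : x ∈ ball (0 : ℂ) R \ closedBall 0 ρ :=
    ⟨mem_ball_zero_iff.2 (hx.2.trans hr'.2), by simpa using hr.1.trans hx.1⟩
  -- the residue theorem for `(z - x)⁻¹ • f z`, whose only pole is `x`
  have hres : Tendsto (fun z => (z - x) • (z - x)⁻¹ • f z) (𝓝[≠] x) (𝓝 (f x)) := by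
    refine ((hf.continuousOn.continuousAt (hU.mem_nhds hxU)).tendsto.mono_left
      nhdsWithin_le_nhds).congr' ?_
    filter_upwards [self_mem_nhdsWithin] with z hz
    rw [smul_smul, mul_inv_cancel₀ (sub_ne_zero.2 hz), one_smul]
  simpa using circleIntegral_sub_circleIntegral_eq_sum_residues (s := {x})
    (f := fun z => (z - x)⁻¹ • f z) (A := fun _ => f x) hU (hρ.trans_lt hr.1)
    (hx.1.le.trans hx.2.le) (closedBall_sdiff_ball_subset_ball_sdiff_closedBall hr hr')
    (by simpa using hx.symm)
    (fun z hz => ((differentiableAt_id.sub_const x).inv (sub_ne_zero.2 (by simpa using hz.2))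
      ).differentiableWithinAt.smul ((hf z hz.1).mono sdiff_subset))
    (by simpa using hres)

theorem hasSum_laurentCoeff (hf : DifferentiableOn ℂ f (ball 0 R \ closedBall 0 ρ))
    (hρ : 0 ≤ ρ) {r : ℝ} (hr : r ∈ Ioo ρ R) {x : ℂ} (hx : ‖x‖ ∈ Ioo ρ R) :
    HasSum (fun k : ℤ => x ^ k • laurentCoeff f r k) (f x) := by
  obtain ⟨ρ', hρρ', hρ'x⟩ := exists_between hx.1
  obtain ⟨R', hxR', hR'R⟩ := exists_between hx.2
  have hρ' : ρ' ∈ Ioo ρ R := ⟨hρρ', hρ'x.trans hx.2⟩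
  have hR' : R' ∈ Ioo ρ R := ⟨hx.1.trans hxR', hR'R⟩
  have hint : ∀ r' ∈ Ioo ρ R, CircleIntegrable f 0 r' := fun r' hr' =>
    (hf.continuousOn.mono (by rw [← closedBall_sdiff_ball]; exact
      closedBall_sdiff_ball_subset_ball_sdiff_closedBall hr' hr')).circleIntegrable
      (hρ.trans hr'.1.le)
  have hnonneg := hasSum_laurentCoeff_natCast (hint R' hR') hxR'
  have hneg := hasSum_laurentCoeff_neg_natCast_add_one (hint ρ' hρ') (hρ.trans_lt hρρ') hρ'x
  rw [← laurentCoeff_eq_of_mem_Ioo hf hρ hr hR'] at hnonneg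
  rw [← laurentCoeff_eq_of_mem_Ioo hf hρ hr hρ'] at hneg
  have hsum := HasSum.of_nat_of_neg_add_one (f := fun k : ℤ => x ^ k • laurentCoeff f r k)
    hnonneg hneg
  rwa [← smul_add, ← sub_eq_add_neg,
    circleIntegral_sub_inv_smul_sub_circleIntegral_sub_inv_smul hf hρ hρ' hR' ⟨hρ'x, hxR'⟩,
    inv_smul_smul₀ two_pi_I_ne_zero] at hsum

end annulus

end

theorem eq_zero_of_zpow_two_mul_mul_mem_annulus {q p : ℂ} {k : ℤ} (hq0 : 0 < ‖q‖)
    (hq1 : ‖q‖ < 1) (hp : p ≠ 0)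
    (h : q ^ (2 * k) * p ∈ ball (0 : ℂ) (‖p‖ / ‖q‖ ^ 2) \ closedBall 0 (‖q‖ ^ 2 * ‖p‖)) :
    k = 0 := by
  have hp0 : 0 < ‖p‖ := norm_pos_iff.2 hp
  obtain ⟨h1, h2⟩ := h
  rw [mem_ball_zero_iff, norm_mul, norm_zpow, div_eq_mul_inv, mul_comm, mul_lt_mul_iff_right₀ hp0,
    ← zpow_natCast, ← zpow_neg] at h1
  rw [mem_closedBall_zero_iff, not_le, norm_mul, norm_zpow, mul_lt_mul_iff_left₀ hp0,
    ← zpow_natCast] at h2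
  rw [zpow_lt_zpow_iff_right_of_lt_one₀ hq0 hq1] at h1 h2
  omega

theorem differentiableOn_annulus_sdiff_of_analyticAt {q a b : ℂ} {w : ℂ → ℂ} (hq0 : 0 < ‖q‖)
    (hq1 : ‖q‖ < 1) (ha : a ≠ 0) (hb : b ≠ 0)
    (hanal : ∀ x : ℂ, x ≠ 0 → (∀ k : ℤ, x ≠ q ^ (2 * k) * a ∧ x ≠ q ^ (2 * k) * b) →
      AnalyticAt ℂ w x) :
    DifferentiableOn ℂ w
      ((ball 0 (min ‖a‖ ‖b‖ / ‖q‖ ^ 2) \ closedBall 0 (‖q‖ ^ 2 * max ‖a‖ ‖b‖)) \ {a, b}) := by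
  rintro z ⟨⟨hzR, hzρ⟩, hzab⟩
  have hz0 : z ≠ 0 := by
    rintro rfl
    exact hzρ (mem_closedBall_zero_iff.2 (by simp; positivity))
  have hmove : ∀ p ∈ ({a, b} : Set ℂ), ∀ k : ℤ, z ≠ q ^ (2 * k) * p := by
    rintro p hp k rfl
    have hp0 : p ≠ 0 := by rcases hp with rfl | rfl <;> assumption
    have hpmin : min ‖a‖ ‖b‖ ≤ ‖p‖ := by rcases hp with rfl | rfl <;> simp
    have hpmax : ‖p‖ ≤ max ‖a‖ ‖b‖ := by rcases hp with rfl | rfl <;> simp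
    obtain rfl : k = 0 := eq_zero_of_zpow_two_mul_mul_mem_annulus hq0 hq1 hp0
      ⟨ball_subset_ball (by gcongr) hzR, fun h => hzρ (closedBall_subset_closedBall (by gcongr) h)⟩
    simp_all
  exact (hanal z hz0 fun k => ⟨hmove a (by simp) k, hmove b (by simp) k⟩).differentiableAt
    |>.differentiableWithinAt

theorem circleIntegral_pow_mul_of_periodic {q : ℂ} {w : ℂ → ℂ}
    (hperiod : ∀ x : ℂ, x ≠ 0 → w (q ^ 2 * x) = w x) (i : ℕ) {r : ℝ} (hr : 0 < r) :
    (∮ z in C(0, ‖q‖ ^ 2 * r), z ^ i * w z) = q ^ (2 * i + 2) * ∮ z in C(0, r), z ^ i * w z := by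
  rw [← norm_pow, circleIntegral_comp_mul_left, smul_eq_mul,
    circleIntegral.integral_congr hr.le (g := fun z => q ^ (2 * i) * (z ^ i * w z)),
    circleIntegral.integral_const_mul]
  · ring
  · intro z hz
    simp only [hperiod z (ne_zero_of_mem_sphere hr.ne' ⟨z, hz⟩), mul_pow, ← pow_mul]
    ring

theorem tendsto_sub_smul_pow_mul {w : ℂ → ℂ} {p A : ℂ}
    (h : Tendsto (fun z => (z - p) * w z) (𝓝[≠] p) (𝓝 A)) (i : ℕ) :
    Tendsto (fun z => (z - p) • (z ^ i * w z)) (𝓝[≠] p) (𝓝 (p ^ i * A)) :=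
  (((continuous_pow i).tendsto p).mono_left nhdsWithin_le_nhds).mul h |>.congr fun z => by
    rw [smul_eq_mul]
    ring

theorem one_sub_pow_mul_circleIntegral_pow_mul_eq {q a b : ℂ} {w : ℂ → ℂ} {U : Set ℂ}
    (hq0 : 0 < ‖q‖) (hU : IsOpen U) (hann : closedBall 0 1 \ ball 0 (‖q‖ ^ 2) ⊆ U)
    (ha : a ∈ ball 0 1 \ closedBall 0 (‖q‖ ^ 2)) (hb : b ∈ ball 0 1 \ closedBall 0 (‖q‖ ^ 2))
    (hab : a ≠ b) (hw : DifferentiableOn ℂ w (U \ {a, b}))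
    (hperiod : ∀ x : ℂ, x ≠ 0 → w (q ^ 2 * x) = w x)
    (hpole_a : Tendsto (fun x => (x - a) * w x) (𝓝[≠] a) (𝓝 a))
    (hpole_b : Tendsto (fun x => (x - b) * w x) (𝓝[≠] b) (𝓝 (-b))) (i : ℕ) :
    (1 - q ^ (2 * i + 2)) * ∮ z in C(0, 1), z ^ i * w z =
      2 * π * I * (a ^ (i + 1) - b ^ (i + 1)) := by
  have hq21 : ‖q‖ ^ 2 < 1 := (by simpa using ha.2 : ‖q‖ ^ 2 < ‖a‖).trans (by simpa using ha.1)
  have hres := circleIntegral_sub_circleIntegral_eq_sum_residues (f := fun z => z ^ i * w z)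
    (s := {a, b}) (A := fun p => if p = a then a ^ (i + 1) else -b ^ (i + 1)) hU
    (by positivity) hq21.le hann (by simp [insert_subset_iff, ha, hb])
    (by simpa using (differentiable_pow i).differentiableOn.fun_mul hw) ?_
  · have hrot := circleIntegral_pow_mul_of_periodic hperiod i one_pos
    rw [mul_one] at hrot
    rw [hrot, Finset.sum_pair hab, if_pos rfl, if_neg hab.symm, smul_eq_mul] at hres
    linear_combination hres
  · intro p hp
    rcases Finset.mem_insert.1 hp with rfl | hp
    · simpa [pow_succ] using tendsto_sub_smul_pow_mul hpole_a i
    · rw [Finset.mem_singleton.1 hp, if_neg hab.symm]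
      simpa [pow_succ] using tendsto_sub_smul_pow_mul hpole_b i

theorem inv_two_pi_I_mul_eq_of_one_sub_pow_mul_eq {q a b J : ℂ} (hq : ‖q‖ < 1)
    (hb : b = q ^ 2 / a) (i : ℕ)
    (hJ : (1 - q ^ (2 * i + 2)) * J = 2 * π * I * (a ^ (i + 1) - b ^ (i + 1))) :
    (2 * π * I)⁻¹ * J = (a ^ ((i : ℤ) + 1) - q ^ (2 * (i : ℤ) + 2) * a ^ (-(i : ℤ) - 1)) /
      (1 - q ^ (2 * ((i : ℤ) + 1))) := by
  have hden : (1 : ℂ) - q ^ (2 * i + 2) ≠ 0 := by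
    refine sub_ne_zero.2 fun h => (pow_lt_one₀ (norm_nonneg q) hq (by omega : 2 * i + 2 ≠ 0)).ne ?_
    rw [← norm_pow, ← h, norm_one]
  have hbpow : b ^ (i + 1) = q ^ (2 * i + 2) * (a ^ (i + 1))⁻¹ := by
    rw [hb, div_pow, ← pow_mul, div_eq_mul_inv, mul_add, mul_one]
  rw [show (i : ℤ) + 1 = ((i + 1 : ℕ) : ℤ) by push_cast; ring,
    show 2 * (i : ℤ) + 2 = ((2 * i + 2 : ℕ) : ℤ) by push_cast; ring,
    show -(i : ℤ) - 1 = -((i + 1 : ℕ) : ℤ) by push_cast; ring,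
    show 2 * ((i + 1 : ℕ) : ℤ) = ((2 * i + 2 : ℕ) : ℤ) by push_cast; ring, zpow_neg,
    zpow_natCast, zpow_natCast, ← hbpow, eq_div_iff hden]
  field_simp
  linear_combination hJ

theorem norm_sq_div_mem_Ioo {q a : ℂ} (hq0 : 0 < ‖q‖) (ha1 : ‖q‖ ^ 2 < ‖a‖) (ha2 : ‖a‖ < 1) :
    ‖q ^ 2 / a‖ ∈ Ioo (‖q‖ ^ 2) 1 := by
  have ha0 : 0 < ‖a‖ := (pow_pos hq0 2).trans ha1
  rw [norm_div, norm_pow, mem_Ioo, lt_div_iff₀ ha0, div_lt_one ha0]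
  exact ⟨mul_lt_of_lt_one_right (pow_pos hq0 2) ha2, ha1⟩

/-- The Laurent coefficients on the unit circle of the quasi-periodic meromorphic
function `w` with simple poles at `q^{2k}a`, `q^{2k}b` and residues `a` at `a`,
`−b` at `b` (i.e. normalized so that `A/a = 1`, `B/b = −1`). -/
theorem laurent_coefficients_of_w (q a : ℂ) (hq0 : 0 < ‖q‖)
    (hq1 : ‖q‖ < 1) (ha1 : ‖q‖ ^ 2 < ‖a‖)
    (ha2 : ‖a‖ < 1) (b : ℂ) (hb : b = q ^ 2 / a)
    (w : ℂ → ℂ)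
    (hperiod : ∀ x : ℂ, x ≠ 0 → w (q ^ 2 * x) = w x)
    (hanal : ∀ x : ℂ, x ≠ 0 → (∀ k : ℤ, x ≠ q ^ (2 * k) * a ∧ x ≠ q ^ (2 * k) * b) →
      AnalyticAt ℂ w x)
    (hpole_a : Filter.Tendsto (fun x => (x - a) * w x) (nhdsWithin a {a}ᶜ) (nhds a))
    (hpole_b : Filter.Tendsto (fun x => (x - b) * w x) (nhdsWithin b {b}ᶜ) (nhds (-b))) :
    ∃ c : ℤ → ℂ,
      (∀ x : ℂ, ‖x‖ = 1 → HasSum (fun k : ℤ => c k * x ^ k) (w x)) ∧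
      ∀ i : ℕ, c (-(i : ℤ) - 1) =
        (a ^ ((i : ℤ) + 1) - q ^ (2 * (i : ℤ) + 2) * a ^ (-(i : ℤ) - 1)) /
          (1 - q ^ (2 * ((i : ℤ) + 1))) := by
  have hq2 : 0 < ‖q‖ ^ 2 := by positivity
  have hq21 : ‖q‖ ^ 2 < 1 := pow_lt_one₀ hq0.le hq1 two_ne_zero
  have ha0 : a ≠ 0 := norm_pos_iff.1 (hq2.trans ha1)
  obtain ⟨hb1, hb2⟩ : ‖b‖ ∈ Ioo (‖q‖ ^ 2) 1 := hb ▸ norm_sq_div_mem_Ioo hq0 ha1 ha2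
  have hab : a ≠ b := by
    rintro rfl
    exact ha0 (by linear_combination (tendsto_nhds_unique hpole_a hpole_b) / 2)
  have hw := differentiableOn_annulus_sdiff_of_analyticAt hq0 hq1 ha0
    (norm_pos_iff.1 (hq2.trans hb1)) hanal
  set m := max ‖a‖ ‖b‖
  set M := min ‖a‖ ‖b‖ / ‖q‖ ^ 2
  have hm : m < 1 := max_lt ha2 hb2
  have hM : 1 < M := (one_lt_div hq2).2 (lt_min ha1 hb1)
  have hqm : ‖q‖ ^ 2 * m < ‖q‖ ^ 2 := mul_lt_of_lt_one_right hq2 hm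
  refine ⟨laurentCoeff w 1, fun x hx => ?_, fun i => ?_⟩
  · have hsub : ball 0 M \ closedBall 0 m ⊆ (ball 0 M \ closedBall 0 (‖q‖ ^ 2 * m)) \ {a, b} := by
      refine fun z ⟨hzM, hzm⟩ => ⟨⟨hzM, fun h => hzm ?_⟩, fun h => hzm ?_⟩
      · exact closedBall_subset_closedBall (mul_le_of_le_one_left (by positivity) hq21.le) h
      · rcases h with rfl | rfl <;> simp [m]
    simpa only [smul_eq_mul, mul_comm] using
      hasSum_laurentCoeff (hw.mono hsub) (by positivity) ⟨hm, hM⟩ (hx ▸ ⟨hm, hM⟩)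
  · rw [laurentCoeff_neg_natCast_sub_one, smul_eq_mul]
    exact inv_two_pi_I_mul_eq_of_one_sub_pow_mul_eq hq1 hb i <|
      one_sub_pow_mul_circleIntegral_pow_mul_eq hq0 (isOpen_ball.sdiff isClosed_closedBall)
        (closedBall_sdiff_ball_subset_ball_sdiff_closedBall ⟨hqm, hq21.trans hM⟩
          ⟨hqm.trans hq21, hM⟩)
        ⟨by simpa using ha2, by simpa using ha1⟩ ⟨by simpa using hb2, by simpa using hb1⟩
        hab hw hperiod hpole_a hpole_b i
end
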